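/- arXiv:2602.13011 — 4 statements merged into one kernel-verified Lean document; each statement's English description precedes it below -/
import Mathlib

section
/- For all integers d ≥ 3, the identity (1/(d-1)) * C(2d-4, d-2) = (1/2^(d-3)) * ∏_{n=0}^{d-4} [ C(d+n, d-3-n) / C(2n+1, n) ] holds, where C denotes the binomial coefficient and the empty product (for d = 3) equals 1. -/
/-!
Write `d = k + 3`. The left side is `C(2k+2, k+1) / (k+2)`, and the product `P k` of the right
side is shown to equal `2^k` times it by induction on `k`. Passing from `k` to `k + 1` multiplies
each old factor `C(k+3+n, k-n)` by `(k+4+n) / (k+1-n)` and appends the factor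
`C(2k+4, 1) / C(2k+1, k)`; in factorials this gives `P (k+1) / P k = 4(2k+3) / (k+3)`, which is
also the ratio of consecutive values of `2^k C(2k+2, k+1) / (k+2)`.
-/

open Finset Nat

section

variable {K : Type*} [Field K] [CharZero K]

theorem cast_choose_succ_succ (m j : ℕ) :
    ((m + 1).choose (j + 1) : K) = m.choose j * (m + 1) / (j + 1) := by
  rw [eq_div_iff (Nat.cast_add_one_ne_zero j), mul_comm (m.choose j : K)]
  exact_mod_cast (add_one_mul_choose_eq m j).symm

theorem prod_range_div_eq_factorial (k : ℕ) :
    ∏ n ∈ range k, ((k + 4 + n : K) / (k + 1 - n)) = (2 * k + 3)! / ((k + 3)! * (k + 1)!) := by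
  have hasc : ∏ n ∈ range k, (k + 4 + n : K) = (2 * k + 3)! / (k + 3)! := by
    rw [eq_div_iff (Nat.cast_ne_zero.mpr (factorial_ne_zero _)), mul_comm]
    have h := factorial_mul_ascFactorial (k + 3) k
    rw [ascFactorial_eq_prod_range, show k + 3 + k = 2 * k + 3 by omega] at h
    exact_mod_cast h
  have hdesc : ∏ n ∈ range k, (k + 1 - n : K) = (k + 1)! := by
    have h := factorial_mul_descFactorial (show k ≤ k + 1 by omega)
    rw [descFactorial_eq_prod_range, show k + 1 - k = 1 by omega, factorial_one, one_mul] at h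
    rw [← h, Nat.cast_prod]
    refine prod_congr rfl fun n hn => ?_
    rw [Nat.cast_sub (by simp at hn; omega)]
    push_cast
    ring
  rw [prod_div_distrib, hasc, hdesc, div_div]

theorem factorial_div_mul_div_choose (k : ℕ) :
    ((2 * k + 3)! / ((k + 3)! * (k + 1)!) : K) * ((2 * k + 4) / (2 * k + 1).choose k) =
      4 * (2 * k + 3) / (k + 3) := by
  have h2k : (2 * k + 3)! = (2 * k + 3) * (2 * k + 2) * (2 * k + 1)! := by
    simp only [factorial_succ]; ring
  have hk3 : (k + 3)! = (k + 3) * (k + 2) * (k + 1) * k ! := by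
    simp only [factorial_succ]; ring
  rw [cast_choose K (show k ≤ 2 * k + 1 by omega), show 2 * k + 1 - k = k + 1 by omega, h2k, hk3,
    factorial_succ k]
  have : ((2 * k + 1)! : K) ≠ 0 := Nat.cast_ne_zero.mpr (factorial_ne_zero _)
  have : (k ! : K) ≠ 0 := Nat.cast_ne_zero.mpr (factorial_ne_zero _)
  have : (k : K) + 2 ≠ 0 := by exact_mod_cast (k + 1).succ_ne_zero
  push_cast
  field_simp
  ring

theorem prod_choose_div_choose_succ (k : ℕ) :
    ∏ n ∈ range (k + 1), ((k + 1 + 3 + n).choose (k + 1 - n) : K) / (2 * n + 1).choose n =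
      (∏ n ∈ range k, ((k + 3 + n).choose (k - n) : K) / (2 * n + 1).choose n) *
        (4 * (2 * k + 3) / (k + 3)) := by
  have hshift : ∀ n ∈ range k,
      ((k + 1 + 3 + n).choose (k + 1 - n) : K) / (2 * n + 1).choose n =
        (k + 3 + n).choose (k - n) / (2 * n + 1).choose n * ((k + 4 + n) / (k + 1 - n)) := by
    intro n hn
    have hnk : n ≤ k := by simp at hn; omega
    rw [show k + 1 + 3 + n = k + 3 + n + 1 by omega, show k + 1 - n = k - n + 1 by omega,
      cast_choose_succ_succ]
    push_cast [hnk]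
    ring
  have hlast : ((k + 1 + 3 + k).choose (k + 1 - k) : K) = 2 * k + 4 := by
    rw [show k + 1 - k = 1 by omega, choose_one_right]
    push_cast
    ring
  rw [prod_range_succ, prod_congr rfl hshift, prod_mul_distrib, prod_range_div_eq_factorial,
    hlast, mul_assoc, factorial_div_mul_div_choose]

theorem prod_choose_div_choose (k : ℕ) :
    ∏ n ∈ range k, ((k + 3 + n).choose (k - n) : K) / (2 * n + 1).choose n =
      2 ^ k * centralBinom (k + 1) / (k + 2) := by
  induction k with
  | zero => simp [centralBinom]
  | succ k ih =>
    rw [prod_choose_div_choose_succ, ih]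
    have hrec : (k + 2 : K) * centralBinom (k + 1 + 1) = 2 * (2 * k + 3) * centralBinom (k + 1) := by
      exact_mod_cast succ_mul_centralBinom_succ (k + 1)
    have : (k : K) + 2 ≠ 0 := by exact_mod_cast (k + 1).succ_ne_zero
    have : (k : K) + 3 ≠ 0 := by exact_mod_cast (k + 2).succ_ne_zero
    push_cast
    rw [show (k : K) + 1 + 2 = k + 3 by ring]
    field_simp
    linear_combination (-2 ^ (k + 1) : K) * hrec

end

/-- For all integers `d ≥ 3`,
`(1/(d-1)) * C(2d-4, d-2) = (1/2^(d-3)) * ∏_{n=0}^{d-4} C(d+n, d-3-n) / C(2n+1, n)`. -/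
theorem stmt_0 (d : ℕ) (hd : 3 ≤ d) :
    (1 / ((d : ℝ) - 1)) * (Nat.choose (2 * d - 4) (d - 2) : ℝ) =
      (1 / 2 ^ (d - 3) : ℝ) *
        ∏ n ∈ Finset.range (d - 3),
          ((Nat.choose (d + n) (d - 3 - n) : ℝ) / (Nat.choose (2 * n + 1) n : ℝ)) := by
  obtain ⟨k, rfl⟩ : ∃ k, d = k + 3 := ⟨d - 3, by omega⟩
  simp only [Nat.add_sub_cancel, show 2 * (k + 3) - 4 = 2 * (k + 1) by omega,
    show k + 3 - 2 = k + 1 by omega, prod_choose_div_choose, ← centralBinom_eq_two_mul_choose]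
  rw [show ((k + 3 : ℕ) : ℝ) - 1 = k + 2 by push_cast; ring]
  field_simp
end

section
/- Let Mom^M : [0,1] → ℝ^M be the moment curve Mom^M(t) = (t, t², ..., t^M). Then for any word w = w₁w₂⋯w_k over the alphabet {1,...,M}, the iterated-integral signature coordinate of Mom^M at w equals ∏_{j=1}^{k} ( w_j / (w₁ + w₂ + ⋯ + w_j) ). In particular, all signature coordinates of the moment curve are positive rational numbers. -/
open MeasureTheory intervalIntegral

/-- Iterated-integral signature helper: the head letter is integrated outermost. -/
noncomputable def sigAux {d : ℕ} (X : ℝ → Fin d → ℝ) : List (Fin d) → ℝ → ℝ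
  | [], _ => 1
  | i :: w, t => ∫ s in (0:ℝ)..t, sigAux X w s * deriv (fun u => X u i) s

/-- Signature coordinate of the path `X` over `[0,T]` at the word `w = i₁⋯i_k`
    (with `i_k` integrated outermost). -/
noncomputable def sig {d : ℕ} (X : ℝ → Fin d → ℝ) (w : List (Fin d)) (T : ℝ) : ℝ :=
  sigAux X w.reverse T

namespace MomAux

variable {M : ℕ}

/-- sum of letter values (letter `i` has value `i+1`) -/
def S (l : List (Fin M)) : ℕ := (l.map (fun i : Fin M => (i : ℕ) + 1)).sum

noncomputable def c : List (Fin M) → ℝ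
  | [] => 1
  | i :: l => (((i : ℕ) + 1 : ℝ) / (S (i :: l) : ℝ)) * c l

lemma S_cons (i : Fin M) (l : List (Fin M)) : S (i :: l) = ((i : ℕ) + 1) + S l := by
  simp [S]

lemma S_reverse (l : List (Fin M)) : S l.reverse = S l := by
  unfold S; rw [List.map_reverse, List.sum_reverse]

lemma S_ofFn {n : ℕ} (g : Fin n → Fin M) : S (List.ofFn g) = ∑ i, ((g i : ℕ) + 1) := by
  unfold S; rw [List.map_ofFn, List.sum_ofFn]; rfl

lemma key (l : List (Fin M)) (t : ℝ) :
    sigAux (fun t (i : Fin M) => t ^ ((i : ℕ) + 1)) l t = c l * t ^ (S l) := by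
  induction l generalizing t with
  | nil => simp [sigAux, S, c]
  | cons i l ih =>
    have h1 : sigAux (fun t (i : Fin M) => t ^ ((i : ℕ) + 1)) (i :: l) t
        = ∫ s in (0:ℝ)..t, (c l * (((i:ℕ)+1))) * s ^ (S l + (i:ℕ)) := by
      rw [show sigAux (fun t (i : Fin M) => t ^ ((i : ℕ) + 1)) (i :: l)
          = fun t => ∫ s in (0:ℝ)..t,
            sigAux (fun t (i : Fin M) => t ^ ((i : ℕ) + 1)) l s *
              deriv (fun u => u ^ ((i:ℕ)+1)) s from rfl]
      refine intervalIntegral.integral_congr fun s _ => ?_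
      rw [ih]
      simp [deriv_pow]
      ring
    rw [h1, intervalIntegral.integral_const_mul, integral_pow]
    have hS : (S (i :: l) : ℝ) = ((i:ℕ) + 1 : ℝ) + S l := by
      rw [S_cons]; push_cast; ring
    have hexp : S l + (i:ℕ) + 1 = S (i :: l) := by rw [S_cons]; omega
    rw [show c (i :: l) = (((i : ℕ) + 1 : ℝ) / (S (i :: l) : ℝ)) * c l from rfl]
    have hne : S (i :: l) ≠ 0 := by rw [S_cons]; omega
    rw [hexp, hS, zero_pow hne]
    push_cast
    ring

end MomAux

/-- The signature coordinate of the moment curve `Mom^M(t) = (t, t², …, t^M)` at a word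
`w = w₁⋯w_k` over `{1,…,M}` equals `∏_{j=1}^k w_j / (w₁ + ⋯ + w_j)`; in particular it is
positive. Here a letter `i : Fin M` represents the value `i + 1 ∈ {1,…,M}`. -/
theorem stmt_2 (M k : ℕ) (w : Fin k → Fin M) :
    sig (fun t (i : Fin M) => t ^ ((i : ℕ) + 1)) (List.ofFn w) 1 =
      ∏ j : Fin k, (((w j : ℕ) + 1 : ℝ) /
        (∑ u ∈ Finset.univ.filter (fun u : Fin k => u ≤ j), ((w u : ℕ) + 1 : ℝ))) ∧
    0 < sig (fun t (i : Fin M) => t ^ ((i : ℕ) + 1)) (List.ofFn w) 1 := by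
  have hpos : ∀ j : Fin k,
      0 < ∑ u ∈ Finset.univ.filter (fun u : Fin k => u ≤ j), ((w u : ℕ) + 1 : ℝ) := by
    intro j
    refine Finset.sum_pos (fun u _ => by positivity) ⟨j, by simp⟩
  have hmain : sig (fun t (i : Fin M) => t ^ ((i : ℕ) + 1)) (List.ofFn w) 1 =
      ∏ j : Fin k, (((w j : ℕ) + 1 : ℝ) /
        (∑ u ∈ Finset.univ.filter (fun u : Fin k => u ≤ j), ((w u : ℕ) + 1 : ℝ))) := by
    rw [sig, MomAux.key, one_pow, mul_one]
    clear hpos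
    induction k with
    | zero => simp [MomAux.c]
    | succ k ih =>
      rw [List.ofFn_succ' w]
      rw [List.concat_eq_append, List.reverse_append, List.reverse_singleton,
        List.singleton_append]
      rw [show MomAux.c (w (Fin.last k) :: (List.ofFn fun i => w i.castSucc).reverse)
          = (((w (Fin.last k) : ℕ) + 1 : ℝ) /
              (MomAux.S (w (Fin.last k) :: (List.ofFn fun i => w i.castSucc).reverse) : ℝ)) *
            MomAux.c (List.ofFn fun i => w i.castSucc).reverse from rfl]
      rw [ih (fun i => w i.castSucc)]
      rw [Fin.prod_univ_castSucc]
      have hden : ∀ j : Fin k,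
          (∑ u ∈ Finset.univ.filter (fun u : Fin (k+1) => u ≤ j.castSucc), ((w u : ℕ) + 1 : ℝ))
            = ∑ u ∈ Finset.univ.filter (fun u : Fin k => u ≤ j), ((w u.castSucc : ℕ) + 1 : ℝ) := by
        intro j
        rw [show Finset.univ.filter (fun u : Fin (k+1) => u ≤ j.castSucc)
            = (Finset.univ.filter (fun u : Fin k => u ≤ j)).map Fin.castSuccEmb from ?_]
        · rw [Finset.sum_map]; rfl
        · ext u
          simp only [Finset.mem_filter, Finset.mem_univ, true_and, Finset.mem_map,
            Fin.castSuccEmb, Function.Embedding.coeFn_mk]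
          constructor
          · intro hu
            have hu' : (u : ℕ) ≤ (j : ℕ) := hu
            exact ⟨⟨u, lt_of_le_of_lt hu' j.isLt⟩, by
              constructor
              · exact hu'
              · apply Fin.ext; simp⟩
          · rintro ⟨v, hv, rfl⟩
            exact hv
      have hS : (MomAux.S (w (Fin.last k) :: (List.ofFn fun i => w i.castSucc).reverse) : ℝ)
          = ∑ u ∈ Finset.univ.filter (fun u : Fin (k+1) => u ≤ Fin.last k), ((w u : ℕ) + 1 : ℝ) := by
        have : Finset.univ.filter (fun u : Fin (k+1) => u ≤ Fin.last k) = Finset.univ := by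
          apply Finset.filter_true_of_mem; intro u _; exact Fin.le_last u
        rw [this, MomAux.S_cons]
        rw [MomAux.S_reverse, MomAux.S_ofFn, Fin.sum_univ_castSucc]
        push_cast
        ring
      rw [hS]
      rw [mul_comm]
      congr 1
      exact Finset.prod_congr rfl fun j _ => by rw [hden j]
  refine ⟨hmain, ?_⟩
  rw [hmain]
  exact Finset.prod_pos fun j _ => div_pos (by positivity) (hpos j)
end

section
/- The level-2 signature matrix σ^(2)(Mom^M) of the moment curve Mom^M(t) = (t, t², ..., t^M), whose (i,j)-entry equals j/(i+j), is invertible for every M ≥ 1. -/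
/-!
Column `j` of the matrix is `j + 1` times column `j` of `H = (1 / (i + j + 2))`, so it suffices that
`H` is positive definite. Since `1 / (i + j + 2) = ∫₀¹ t ^ (i + j + 1) dt`, the quadratic form of `H`
at `x` is `∫₀¹ t p(t)² dt` for the polynomial `p = ∑ xᵢ tⁱ`, which is positive unless `p = 0`.
-/

open Polynomial Matrix intervalIntegral

/-- The Gram matrix of the monomials `1, t, …, t^(n-1)` in `L²([0,1], t dt)`. -/
noncomputable def weightedHilbertMatrix (n : ℕ) : Matrix (Fin n) (Fin n) ℝ :=
  of fun i j => 1 / ((i : ℕ) + (j : ℕ) + 2)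

theorem star_dotProduct_weightedHilbertMatrix_mulVec {n : ℕ} (x : Fin n → ℝ) :
    star x ⬝ᵥ weightedHilbertMatrix n *ᵥ x
      = ∫ t in (0 : ℝ)..1, t * (∑ i, x i * t ^ (i : ℕ)) ^ 2 := by
  have hexpand : ∀ t : ℝ, t * (∑ i, x i * t ^ (i : ℕ)) ^ 2
      = ∑ i, ∑ j, x i * x j * t ^ ((i : ℕ) + (j : ℕ) + 1) := fun t => by
    rw [sq, Finset.sum_mul_sum]
    simp_rw [Finset.mul_sum]
    exact Finset.sum_congr rfl fun i _ => Finset.sum_congr rfl fun j _ => by ring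
  have hmoment : ∀ i j : ℕ, ∫ t in (0 : ℝ)..1, t ^ (i + j + 1) = 1 / ((i : ℝ) + j + 2) :=
    fun i j => by rw [integral_pow]; push_cast; ring
  simp_rw [hexpand]
  rw [integral_finsetSum fun i _ =>
    (continuous_finsetSum _ fun j _ => by fun_prop).intervalIntegrable _ _]
  simp only [dotProduct, mulVec, weightedHilbertMatrix, of_apply, Pi.star_apply, star_trivial,
    Finset.mul_sum]
  refine Finset.sum_congr rfl fun i _ => ?_
  rw [integral_finsetSum fun j _ => (by fun_prop : Continuous _).intervalIntegrable _ _]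
  refine Finset.sum_congr rfl fun j _ => ?_
  rw [integral_const_mul, hmoment]
  ring

theorem integral_mul_eval_sq_pos {p : ℝ[X]} (hp : p ≠ 0) :
    0 < ∫ t in (0 : ℝ)..1, t * p.eval t ^ 2 := by
  refine integral_pos zero_lt_one (by fun_prop) (fun t ht => by have := ht.1.le; positivity) ?_
  obtain ⟨c, ⟨hc0, hc1⟩, hroot⟩ :=
    ((Set.Ioo_infinite zero_lt_one).sdiff (finite_setOfPred_isRoot hp)).nonempty
  refine ⟨c, ⟨hc0.le, hc1.le⟩, ?_⟩
  have : p.eval c ≠ 0 := hroot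
  positivity

theorem posDef_weightedHilbertMatrix (n : ℕ) : (weightedHilbertMatrix n).PosDef := by
  refine .of_dotProduct_mulVec_pos ?_ fun x hx => ?_
  · ext i j
    simp only [weightedHilbertMatrix, conjTranspose_apply, of_apply, star_trivial, add_comm]
  set p : degreeLT ℝ n := (degreeLTEquiv ℝ n).symm x
  have hp : (p : ℝ[X]) ≠ 0 := by simpa [p] using hx
  have heval : ∀ t, (p : ℝ[X]).eval t = ∑ i, x i * t ^ (i : ℕ) := fun t => by
    simp [eval_eq_sum_degreeLTEquiv p.2, p]
  rw [star_dotProduct_weightedHilbertMatrix_mulVec]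
  simpa [heval] using integral_mul_eval_sq_pos hp

theorem stmt_3_general (M : ℕ) :
    (Matrix.of fun i j : Fin M =>
      (((j : ℕ) + 1 : ℝ)) / (((i : ℕ) + 1 : ℝ) + ((j : ℕ) + 1 : ℝ))).det ≠ 0 := by
  have hfactor : (Matrix.of fun i j : Fin M =>
      (((j : ℕ) + 1 : ℝ)) / (((i : ℕ) + 1 : ℝ) + ((j : ℕ) + 1 : ℝ)))
      = weightedHilbertMatrix M * diagonal fun j : Fin M => ((j : ℕ) + 1 : ℝ) := by
    ext i j
    simp only [weightedHilbertMatrix, mul_diagonal, of_apply]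
    ring
  rw [hfactor, det_mul, det_diagonal]
  exact mul_ne_zero (posDef_weightedHilbertMatrix M).det_pos.ne'
    (Finset.prod_ne_zero_iff.mpr fun j _ => by positivity)

/-- The level-2 signature matrix of the moment curve `Mom^M`, with `(i,j)`-entry `j/(i+j)`
(indices `1 ≤ i, j ≤ M`), is invertible for every `M ≥ 1`. -/
theorem stmt_3 (M : ℕ) (hM : 1 ≤ M) :
    (Matrix.of fun i j : Fin M =>
      (((j : ℕ) + 1 : ℝ)) / (((i : ℕ) + 1 : ℝ) + ((j : ℕ) + 1 : ℝ))).det ≠ 0 :=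
  stmt_3_general M
end

section
/- Let Y : [0,t₁] → ℝ^d and Z : [0,t₂] → ℝ^d be C¹ paths and let Y⊔Z : [0,t₁+t₂] → ℝ^d denote their concatenation (agreeing with Y on [0,t₁] and with Y(t₁) - Z(0) + Z(·-t₁) on [t₁, t₁+t₂]). Then for every word i₁⋯i_k, Chen's identity holds: σ(Y⊔Z)_{i₁⋯i_k} = Σ_{j=0}^{k} σ(Y)_{i₁⋯i_j} · σ(Z)_{i_{j+1}⋯i_k}, where the signature coordinate at the empty word is 1. -/
open MeasureTheory intervalIntegral

lemma sigAux_continuous {d : ℕ} (X : ℝ → Fin d → ℝ)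
    (hX : ∀ i, ContDiff ℝ 1 (fun t => X t i)) :
    ∀ v : List (Fin d), Continuous (sigAux X v)
  | [] => continuous_const
  | i :: v => by
    have h1 := sigAux_continuous X hX v
    have h2 : Continuous (fun s => sigAux X v s * deriv (fun u => X u i) s) :=
      h1.mul ((hX i).continuous_deriv le_rfl)
    show Continuous fun t => ∫ s in (0:ℝ)..t, sigAux X v s * deriv (fun u => X u i) s
    exact intervalIntegral.continuous_primitive (fun a b => h2.intervalIntegrable a b) 0

lemma sigAux_left {d : ℕ} (t₁ : ℝ) (ht₁ : 0 ≤ t₁) (Y Z : ℝ → Fin d → ℝ) :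
    ∀ (v : List (Fin d)) (s : ℝ), s ≤ t₁ →
      sigAux (fun t i => if t ≤ t₁ then Y t i else Y t₁ i - Z 0 i + Z (t - t₁) i) v s
        = sigAux Y v s
  | [], _, _ => rfl
  | i :: v, s, hs => by
    show (∫ r in (0:ℝ)..s, _) = ∫ r in (0:ℝ)..s, _
    apply intervalIntegral.integral_congr_ae
    have hne : ∀ᵐ r : ℝ, r ≠ t₁ := by
      rw [MeasureTheory.ae_iff]
      simpa using Real.volume_singleton (a := t₁)
    filter_upwards [hne] with r hr hmem
    have hrt : r < t₁ := by
      have : r ≤ t₁ := by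
        rcases Set.mem_uIoc.1 hmem with h | h
        · exact h.2.trans hs
        · exact h.2.trans ht₁
      exact lt_of_le_of_ne this hr
    have hderiv : deriv (fun u => (fun t i => if t ≤ t₁ then Y t i else Y t₁ i - Z 0 i + Z (t - t₁) i) u i) r
        = deriv (fun u => Y u i) r := by
      apply Filter.EventuallyEq.deriv_eq
      filter_upwards [Iio_mem_nhds hrt] with x hx
      simp [(Set.mem_Iio.1 hx).le]
    rw [hderiv, sigAux_left t₁ ht₁ Y Z v r hrt.le]

lemma chen_aux {d : ℕ} (t₁ : ℝ) (ht₁ : 0 ≤ t₁) (Y Z : ℝ → Fin d → ℝ)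
    (hY : ∀ i, ContDiff ℝ 1 (fun t => Y t i)) (hZ : ∀ i, ContDiff ℝ 1 (fun t => Z t i)) :
    ∀ (v : List (Fin d)) (u : ℝ), 0 ≤ u →
      sigAux (fun t i => if t ≤ t₁ then Y t i else Y t₁ i - Z 0 i + Z (t - t₁) i) v (t₁ + u)
        = ∑ m ∈ Finset.range (v.length + 1), sigAux Z (v.take m) u * sigAux Y (v.drop m) t₁
  | [], u, hu => by simp [sigAux]
  | i :: v, u, hu => by
    have hne : ∀ᵐ r : ℝ, r ≠ t₁ := by
      rw [MeasureTheory.ae_iff]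
      simpa using Real.volume_singleton (a := t₁)
    set W : ℝ → Fin d → ℝ :=
      fun t i => if t ≤ t₁ then Y t i else Y t₁ i - Z 0 i + Z (t - t₁) i with hWdef
    set F : ℝ → ℝ := fun s => sigAux W v s * deriv (fun t => W t i) s with hF
    set F₁ : ℝ → ℝ := fun s => sigAux Y v s * deriv (fun t => Y t i) s with hF₁
    set F₂ : ℝ → ℝ := fun s =>
      (∑ m ∈ Finset.range (v.length + 1),
          sigAux Z (v.take m) (s - t₁) * sigAux Y (v.drop m) t₁)
        * deriv (fun t => Z t i) (s - t₁) with hF₂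
    have hc1 : Continuous F₁ :=
      (sigAux_continuous Y hY v).mul ((hY i).continuous_deriv le_rfl)
    have hcsub : Continuous fun s : ℝ => s - t₁ := continuous_id.sub continuous_const
    have hc2 : Continuous F₂ := by
      apply Continuous.mul
      · exact continuous_finset_sum _ fun m _ =>
          ((sigAux_continuous Z hZ (v.take m)).comp hcsub).mul continuous_const
      · exact ((hZ i).continuous_deriv le_rfl).comp hcsub
    have heq1 : ∀ᵐ s : ℝ, s ∈ Set.uIoc (0:ℝ) t₁ → F s = F₁ s := by
      filter_upwards [hne] with s hs hmem
      have hst : s < t₁ := by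
        have : s ≤ t₁ := by
          rcases Set.mem_uIoc.1 hmem with h | h
          · exact h.2
          · exact h.2.trans ht₁
        exact lt_of_le_of_ne this hs
      have hderiv : deriv (fun t => W t i) s = deriv (fun t => Y t i) s := by
        apply Filter.EventuallyEq.deriv_eq
        filter_upwards [Iio_mem_nhds hst] with x hx
        simp [hWdef, (Set.mem_Iio.1 hx).le]
      show sigAux W v s * deriv (fun t => W t i) s
          = sigAux Y v s * deriv (fun t => Y t i) s
      rw [hderiv, hWdef, sigAux_left t₁ ht₁ Y Z v s hst.le]
    have heq2 : ∀ᵐ s : ℝ, s ∈ Set.uIoc t₁ (t₁ + u) → F s = F₂ s := by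
      filter_upwards with s hmem
      have hst : t₁ < s ∧ s ≤ t₁ + u := by
        rcases Set.mem_uIoc.1 hmem with h | h
        · exact ⟨h.1, h.2⟩
        · exact absurd (h.1.trans_le h.2) (by linarith)
      have hderiv : deriv (fun t => W t i) s = deriv (fun t => Z t i) (s - t₁) := by
        have h1 : deriv (fun t => W t i) s
            = deriv (fun t => Y t₁ i - Z 0 i + Z (t - t₁) i) s := by
          apply Filter.EventuallyEq.deriv_eq
          filter_upwards [Ioi_mem_nhds hst.1] with x hx
          simp [hWdef, not_le.2 (Set.mem_Ioi.1 hx)]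
        rw [h1, deriv_const_add]
        exact deriv_comp_sub_const (fun t => Z t i) t₁ s
      have hsig : sigAux W v s
          = ∑ m ∈ Finset.range (v.length + 1),
              sigAux Z (v.take m) (s - t₁) * sigAux Y (v.drop m) t₁ := by
        have := chen_aux t₁ ht₁ Y Z hY hZ v (s - t₁) (by linarith [hst.1])
        rwa [add_sub_cancel] at this
      show sigAux W v s * deriv (fun t => W t i) s
          = (∑ m ∈ Finset.range (v.length + 1),
              sigAux Z (v.take m) (s - t₁) * sigAux Y (v.drop m) t₁)
            * deriv (fun t => Z t i) (s - t₁)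
      rw [hderiv, hsig]
    have hInt1 : IntervalIntegrable F volume 0 t₁ := by
      rw [intervalIntegrable_iff]
      refine (intervalIntegrable_iff.1 (hc1.intervalIntegrable 0 t₁)).congr_fun_ae ?_
      refine (ae_restrict_iff' measurableSet_uIoc).2 ?_
      filter_upwards [heq1] with s h hmem using (h hmem).symm
    have hInt2 : IntervalIntegrable F volume t₁ (t₁ + u) := by
      rw [intervalIntegrable_iff]
      refine (intervalIntegrable_iff.1 (hc2.intervalIntegrable t₁ (t₁ + u))).congr_fun_ae ?_
      refine (ae_restrict_iff' measurableSet_uIoc).2 ?_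
      filter_upwards [heq2] with s h hmem using (h hmem).symm
    have hsplit : sigAux W (i :: v) (t₁ + u)
        = (∫ s in (0:ℝ)..t₁, F s) + ∫ s in t₁..(t₁ + u), F s :=
      (intervalIntegral.integral_add_adjacent_intervals hInt1 hInt2).symm
    have hpart1 : (∫ s in (0:ℝ)..t₁, F s) = sigAux Y (i :: v) t₁ :=
      intervalIntegral.integral_congr_ae heq1
    have hpart2 : (∫ s in t₁..(t₁ + u), F s)
        = ∑ m ∈ Finset.range (v.length + 1),
            sigAux Z ((i :: v).take (m + 1)) u * sigAux Y ((i :: v).drop (m + 1)) t₁ := by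
      rw [intervalIntegral.integral_congr_ae heq2]
      have hcomp : (∫ s in t₁..(t₁ + u), F₂ s) = ∫ r in (0:ℝ)..u, F₂ (r + t₁) := by
        rw [intervalIntegral.integral_comp_add_right F₂ t₁, zero_add, add_comm u t₁]
      rw [hcomp]
      have hint : (∫ r in (0:ℝ)..u, F₂ (r + t₁))
          = ∫ r in (0:ℝ)..u, ∑ m ∈ Finset.range (v.length + 1),
              (sigAux Z (v.take m) r * deriv (fun t => Z t i) r) * sigAux Y (v.drop m) t₁ := by
        congr 1
        funext r
        rw [hF₂]
        simp only [add_sub_cancel_right]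
        rw [Finset.sum_mul]
        exact Finset.sum_congr rfl fun m _ => by ring
      rw [hint, intervalIntegral.integral_finset_sum]
      · refine Finset.sum_congr rfl fun m _ => ?_
        rw [intervalIntegral.integral_mul_const]
        rfl
      · intro m _
        exact (((sigAux_continuous Z hZ (v.take m)).mul
          ((hZ i).continuous_deriv le_rfl)).mul continuous_const).intervalIntegrable 0 u
    rw [hsplit, hpart1, hpart2, List.length_cons]
    conv_rhs => rw [Finset.sum_range_succ']
    have h1 : sigAux Z [] u = 1 := rfl
    simp only [List.take_zero, List.drop_zero, h1, one_mul]
    exact add_comm _ _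

/-- Chen's identity: for C¹ paths `Y : [0,t₁] → ℝ^d` and `Z : [0,t₂] → ℝ^d` and their
concatenation `Y⊔Z : [0,t₁+t₂] → ℝ^d`, for every word `w`,
`σ(Y⊔Z)_w = Σ_{j=0}^{k} σ(Y)_{w₁⋯w_j} σ(Z)_{w_{j+1}⋯w_k}`. -/
theorem stmt_14 (d : ℕ) (t₁ t₂ : ℝ) (ht₁ : 0 ≤ t₁) (ht₂ : 0 ≤ t₂)
    (Y Z : ℝ → Fin d → ℝ)
    (hY : ∀ i, ContDiff ℝ 1 (fun t => Y t i)) (hZ : ∀ i, ContDiff ℝ 1 (fun t => Z t i))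
    (w : List (Fin d)) :
    sig (fun t i => if t ≤ t₁ then Y t i else Y t₁ i - Z 0 i + Z (t - t₁) i) w (t₁ + t₂) =
      ∑ j ∈ Finset.range (w.length + 1), sig Y (w.take j) t₁ * sig Z (w.drop j) t₂ := by
  unfold sig
  rw [chen_aux t₁ ht₁ Y Z hY hZ w.reverse t₂ ht₂, List.length_reverse]
  conv_rhs => rw [← Finset.sum_range_reflect]
  refine Finset.sum_congr rfl fun m hm => ?_
  have hm' : m ≤ w.length := Nat.lt_succ_iff.1 (Finset.mem_range.1 hm)
  have e1 : w.length + 1 - 1 - m = w.length - m := by omega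
  rw [e1, List.reverse_take, List.reverse_drop]
  have e2 : w.length - (w.length - m) = m := by omega
  rw [e2, mul_comm]
end
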